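/- arXiv:2305.10908 — 2 statements merged into one kernel-verified Lean document; each statement's English description precedes it below -/
import Mathlib

section
/- Let G be a group generated by elements a₁,b₁,...,a_g,b_g,x,y subject (among possibly other relations) to relations of the form μ·x = 1, μ′·y = 1, μᵢ·aᵢ = 1 and μᵢ′·bᵢ = 1 (i = 2,...,g), where μ and μ′ are products of conjugates of commutators [b₁,y] and [b₁,x] respectively, and each μᵢ, μᵢ′ is a product of conjugates of commutators [bᵢ,y] and [aᵢ,y] respectively. Then the quotient of G by the normal closure of b₁ is generated by the image of a₁ together with images of the normal generators of the other relations; in particular if the listed relations generate all relations, G/N(b₁) is cyclic generated by the image of a₁. -/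
open scoped commutatorElement

/-- Configuration 1 (Proposition 2.2(a)): if `G` is generated by
`a₁,b₁,…,a_g,b_g,x,y` and relations `μ·x = 1`, `μ′·y = 1`, `μᵢ·aᵢ = 1`,
`μᵢ′·bᵢ = 1` (`i ≥ 2`) hold, where `μ, μ′, μᵢ, μᵢ′` are products of
conjugates of the commutators `[b₁,y]`, `[b₁,x]`, `[bᵢ,y]`, `[aᵢ,y]`
respectively, then `G/N(b₁)` is cyclic, generated by the image of `a₁`. -/
theorem configuration_one {G : Type*} [Group G] (g : ℕ)
    (a b : Fin (g + 1) → G) (x y : G)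
    (hgen : Subgroup.closure (Set.range a ∪ Set.range b ∪ {x, y}) = ⊤)
    (μ μ' : G) (μi μi' : Fin (g + 1) → G)
    (hμ : μ ∈ Subgroup.normalClosure {⁅b 0, y⁆}) (hx : μ * x = 1)
    (hμ' : μ' ∈ Subgroup.normalClosure {⁅b 0, x⁆}) (hy : μ' * y = 1)
    (hμi : ∀ i, i ≠ 0 → μi i ∈ Subgroup.normalClosure {⁅b i, y⁆})
    (hai : ∀ i, i ≠ 0 → μi i * a i = 1)
    (hμi' : ∀ i, i ≠ 0 → μi' i ∈ Subgroup.normalClosure {⁅a i, y⁆})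
    (hbi : ∀ i, i ≠ 0 → μi' i * b i = 1) :
    Subgroup.zpowers
        ((QuotientGroup.mk (a 0)) : G ⧸ Subgroup.normalClosure {b 0}) = ⊤ := by
  set N := Subgroup.normalClosure ({b 0} : Set G) with hN
  let f := QuotientGroup.mk' N
  -- key lemma: if f c = 1 then f kills normalClosure {c}
  have key : ∀ c : G, f c = 1 → ∀ s ∈ Subgroup.normalClosure ({c} : Set G), f s = 1 := by
    intro c hc s hs
    have hle : Subgroup.normalClosure ({c} : Set G) ≤ f.ker :=
      Subgroup.normalClosure_le_normal (by
        intro z hz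
        rcases hz with rfl
        exact hc)
    exact hle hs
  have hb0 : f (b 0) = 1 := by
    rw [QuotientGroup.mk'_apply, QuotientGroup.eq_one_iff]
    exact Subgroup.subset_normalClosure rfl
  have hcomm : ∀ z : G, f ⁅b 0, z⁆ = 1 := by
    intro z
    have : f ⁅b 0, z⁆ = ⁅f (b 0), f z⁆ := map_commutatorElement f _ _
    rw [this, hb0, commutatorElement_one_left]
  have hxq : f x = 1 := by
    have hμ1 : f μ = 1 := key _ (hcomm y) μ hμ
    have := congrArg f hx
    rw [map_mul, map_one, hμ1, one_mul] at this
    exact this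
  have hyq : f y = 1 := by
    have hμ1 : f μ' = 1 := key _ (hcomm x) μ' hμ'
    have := congrArg f hy
    rw [map_mul, map_one, hμ1, one_mul] at this
    exact this
  have hcommy : ∀ z : G, f ⁅z, y⁆ = 1 := by
    intro z
    have : f ⁅z, y⁆ = ⁅f z, f y⁆ := map_commutatorElement f _ _
    rw [this, hyq, commutatorElement_one_right]
  have haq : ∀ i, i ≠ 0 → f (a i) = 1 := by
    intro i hi
    have hμ1 : f (μi i) = 1 := key _ (hcommy (b i)) _ (hμi i hi)
    have := congrArg f (hai i hi)
    rw [map_mul, map_one, hμ1, one_mul] at this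
    exact this
  have hbq : ∀ i, f (b i) = 1 := by
    intro i
    by_cases hi : i = 0
    · rw [hi]; exact hb0
    · have hμ1 : f (μi' i) = 1 := key _ (hcommy (a i)) _ (hμi' i hi)
      have := congrArg f (hbi i hi)
      rw [map_mul, map_one, hμ1, one_mul] at this
      exact this
  -- every generator maps into zpowers of f (a 0)
  have hsub : f '' (Set.range a ∪ Set.range b ∪ {x, y}) ⊆
      (Subgroup.zpowers (f (a 0)) : Subgroup (G ⧸ N)) := by
    rintro _ ⟨z, hz, rfl⟩
    rcases hz with (⟨i, rfl⟩ | ⟨i, rfl⟩) | hz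
    · by_cases hi : i = 0
      · rw [hi]; exact Subgroup.mem_zpowers _
      · rw [haq i hi]; exact Subgroup.one_mem _
    · rw [hbq i]; exact Subgroup.one_mem _
    · rcases hz with rfl | rfl
      · rw [hxq]; exact Subgroup.one_mem _
      · rw [hyq]; exact Subgroup.one_mem _
  have hsurj : Function.Surjective f := QuotientGroup.mk'_surjective N
  have htop : (Subgroup.closure (Set.range a ∪ Set.range b ∪ {x, y})).map f = ⊤ := by
    rw [hgen, Subgroup.map_top_of_surjective f hsurj]
  rw [MonoidHom.map_closure] at htop
  have : (⊤ : Subgroup (G ⧸ N)) ≤ Subgroup.zpowers (f (a 0)) := by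
    rw [← htop]
    exact Subgroup.closure_le _ |>.mpr hsub
  exact top_le_iff.mp this
end

section
/- Let G be a group generated by a₁,b₁,...,a_g,b_g,x,y subject to relations μ·x=1, μ′·y=1, μᵢ·aᵢ=1 (i=3,...,g), μⱼ′·bⱼ=1 (j=1,...,g), where μ is a product of conjugates of [a₂,y], μ′ of [b₁,x], each μᵢ of [bᵢ,x], and each μⱼ′ of [aⱼ,y]. If these generate all relations, then G/N(a₂) is cyclic generated by the image of a₁. -/
open scoped commutatorElement

/-- Configuration 2 (Proposition 2.2(b)): if `G` is generated by
`a₁,b₁,…,a_g,b_g,x,y` and relations `μ·x = 1`, `μ′·y = 1`, `μᵢ·aᵢ = 1`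
(`i ≥ 3`), `μⱼ′·bⱼ = 1` (all `j`) hold, where `μ, μ′, μᵢ, μⱼ′` are products
of conjugates of `[a₂,y]`, `[b₁,x]`, `[bᵢ,x]`, `[aⱼ,y]` respectively, then
`G/N(a₂)` is cyclic, generated by the image of `a₁`. Here index `0`
corresponds to `1` and index `1` to `2`. -/
theorem configuration_two {G : Type*} [Group G] (g : ℕ)
    (a b : Fin (g + 2) → G) (x y : G)
    (hgen : Subgroup.closure (Set.range a ∪ Set.range b ∪ {x, y}) = ⊤)
    (μ μ' : G) (μi μj' : Fin (g + 2) → G)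
    (hμ : μ ∈ Subgroup.normalClosure {⁅a 1, y⁆}) (hx : μ * x = 1)
    (hμ' : μ' ∈ Subgroup.normalClosure {⁅b 0, x⁆}) (hy : μ' * y = 1)
    (hμi : ∀ i, i ≠ 0 → i ≠ 1 → μi i ∈ Subgroup.normalClosure {⁅b i, x⁆})
    (hai : ∀ i, i ≠ 0 → i ≠ 1 → μi i * a i = 1)
    (hμj' : ∀ j, μj' j ∈ Subgroup.normalClosure {⁅a j, y⁆})
    (hbj : ∀ j, μj' j * b j = 1) :
    Subgroup.zpowers
        ((QuotientGroup.mk (a 0)) : G ⧸ Subgroup.normalClosure {a 1}) = ⊤ := by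
  set N := Subgroup.normalClosure {a 1} with hNdef
  have hNn : N.Normal := Subgroup.normalClosure_normal
  have ha1 : a 1 ∈ N := Subgroup.subset_normalClosure rfl
  -- commutators with an entry in N lie in N
  have hcl : ∀ u v : G, v ∈ N → ⁅u, v⁆ ∈ N := fun u v hv =>
    mul_mem (hNn.conj_mem v hv u) (inv_mem hv)
  have hcr : ∀ u v : G, u ∈ N → ⁅u, v⁆ ∈ N := fun u v hu => by
    have h : ⁅u, v⁆ = u * (v * u⁻¹ * v⁻¹) := by group
    rw [h]
    exact mul_mem hu (hNn.conj_mem u⁻¹ (inv_mem hu) v)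
  have key : ∀ w s : G, s ∈ N → w ∈ Subgroup.normalClosure {s} → w ∈ N :=
    fun w s hs hw =>
      Subgroup.normalClosure_le_normal (by simpa using hs) hw
  -- x ∈ N
  have hμN : μ ∈ N := key μ _ (hcr _ _ ha1) hμ
  have hxN : x ∈ N := by
    have : x = μ⁻¹ := eq_inv_of_mul_eq_one_right hx
    rw [this]; exact inv_mem hμN
  -- y ∈ N
  have hyN : y ∈ N := by
    have hμ'N : μ' ∈ N := key μ' _ (hcl _ _ hxN) hμ'
    have : y = μ'⁻¹ := eq_inv_of_mul_eq_one_right hy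
    rw [this]; exact inv_mem hμ'N
  have haN : ∀ i, i ≠ 0 → a i ∈ N := by
    intro i hi0
    by_cases hi1 : i = 1
    · rw [hi1]; exact ha1
    · have hmiN : μi i ∈ N := key _ _ (hcl _ _ hxN) (hμi i hi0 hi1)
      have : a i = (μi i)⁻¹ := eq_inv_of_mul_eq_one_right (hai i hi0 hi1)
      rw [this]; exact inv_mem hmiN
  have hbN : ∀ j, b j ∈ N := by
    intro j
    have hmjN : μj' j ∈ N := key _ _ (hcl _ _ hyN) (hμj' j)
    have : b j = (μj' j)⁻¹ := eq_inv_of_mul_eq_one_right (hbj j)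
    rw [this]; exact inv_mem hmjN
  -- conclude
  rw [eq_top_iff]
  intro q hq
  obtain ⟨w, rfl⟩ := QuotientGroup.mk_surjective q
  clear hq
  have hw : w ∈ Subgroup.closure (Set.range a ∪ Set.range b ∪ {x, y}) := by
    rw [hgen]; trivial
  induction hw using Subgroup.closure_induction with
  | mem s hs =>
      rcases hs with (⟨i, rfl⟩ | ⟨j, rfl⟩) | hs
      · by_cases hi0 : i = 0
        · rw [hi0]; exact Subgroup.mem_zpowers _
        · have : (QuotientGroup.mk (a i) : G ⧸ N) = 1 :=
            (QuotientGroup.eq_one_iff _).2 (haN i hi0)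
          rw [this]; exact one_mem _
      · have : (QuotientGroup.mk (b j) : G ⧸ N) = 1 :=
          (QuotientGroup.eq_one_iff _).2 (hbN j)
        rw [this]; exact one_mem _
      · rcases hs with rfl | rfl
        · have : (QuotientGroup.mk s : G ⧸ N) = 1 :=
            (QuotientGroup.eq_one_iff _).2 hxN
          rw [this]; exact one_mem _
        · have : (QuotientGroup.mk s : G ⧸ N) = 1 :=
            (QuotientGroup.eq_one_iff _).2 hyN
          rw [this]; exact one_mem _
  | one => simpa using one_mem _
  | mul u v _ _ hu hv => simpa using mul_mem hu hv
  | inv u _ hu => simpa using inv_mem hu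
end
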